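/- For every 0 ≤ t < ∞ and every compact subset K ⊂ S, the functions ρ̃_{t,K} and ρ_{t,K} are pseudo-metrics on D_exp(S); in particular each satisfies the triangle inequality. -/

import Mathlib

open Filter Topology Set MeasureTheory
open scoped ENNReal NNReal

noncomputable section

namespace LocSkor

/-- Paths with values in the one-point compactification. -/
abbrev Path (S : Type*) := ℝ → OnePoint S

variable {S : Type*} [TopologicalSpace S]

/-- Distance between two points of `S^Δ`, with junk value `0` if one of them is `Δ`. -/
noncomputable def dd (ρ : S → S → ℝ) : OnePoint S → OnePoint S → ℝ :=
  fun a b => Option.elim (show Option S from a) 0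
    (fun a' => Option.elim (show Option S from b) 0 (fun b' => ρ a' b'))

/-- The set of times at which the path has already exploded. -/
def xiSet (x : Path S) : Set ℝ := {t : ℝ | x t = OnePoint.infty}

/-- The path explodes in finite time, i.e. `ξ(x) < ∞`. -/
def explodes (x : Path S) : Prop := (xiSet x).Nonempty

/-- The (real-valued) explosion time `ξ(x)`; junk value `0` if the path never explodes. -/
def xiR (x : Path S) : ℝ := sInf (xiSet x)

/-- The `[0,∞]`-valued explosion time `ξ(x)`. -/
def xiE (x : Path S) : ℝ≥0∞ := ⨅ t ∈ xiSet x, ENNReal.ofReal t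

/-- The range `{x_s, 0 ≤ s < ξ(x)}` of the path, as a subset of `S`. -/
def pathRange (x : Path S) : Set S := {a : S | ∃ s : ℝ, 0 ≤ s ∧ x s = (a : OnePoint S)}

/-- `x` is an exploding cadlag path: `x_t = Δ` exactly for `t ≥ ξ(x)` (and we normalize
`x` on negative times), `x` is right-continuous before explosion, and has left limits in `S`
at every point of `(0, ξ(x))`. -/
def IsDexp (x : Path S) : Prop :=
  (∀ t ≤ (0:ℝ), x t = x 0) ∧
  (∀ ⦃s t : ℝ⦄, s ≤ t → x s = OnePoint.infty → x t = OnePoint.infty) ∧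
  IsClosed (xiSet x) ∧
  (∀ t : ℝ, 0 ≤ t → x t ≠ OnePoint.infty → Tendsto x (𝓝[>] t) (𝓝 (x t))) ∧
  (∀ t : ℝ, 0 < t → x t ≠ OnePoint.infty →
    ∃ a : S, Tendsto x (𝓝[<] t) (𝓝 (a : OnePoint S)))

/-- `x` belongs to the local cadlag space `𝔻_loc(S)`. -/
def IsDloc (x : Path S) : Prop :=
  IsDexp x ∧
  ((explodes x ∧ 0 < xiR x ∧ IsCompact (closure (pathRange x))) →
    ∃ a : S, Tendsto x (𝓝[<] xiR x) (𝓝 (a : OnePoint S)))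

/-- `x` belongs to the global cadlag space `𝔻(S)`, i.e. `ξ(x) = ∞`. -/
def IsDglob (x : Path S) : Prop := IsDexp x ∧ ∀ t : ℝ, x t ≠ OnePoint.infty

/-- `x` is a cadlag path with values in the compact space `S^Δ`, i.e. `x ∈ 𝔻(S^Δ)`. -/
def IsCadlagDelta (x : Path S) : Prop :=
  (∀ t ≤ (0:ℝ), x t = x 0) ∧
  (∀ t : ℝ, 0 ≤ t → Tendsto x (𝓝[>] t) (𝓝 (x t))) ∧
  (∀ t : ℝ, 0 < t → ∃ a : OnePoint S, Tendsto x (𝓝[<] t) (𝓝 a))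

/-- The space `𝔻_exp(S)` of exploding cadlag paths. -/
def DexpT (S : Type*) [TopologicalSpace S] : Type _ := {x : Path S // IsDexp x}

/-- The space `𝔻_loc(S)`. -/
def DlocT (S : Type*) [TopologicalSpace S] : Type _ := {x : Path S // IsDloc x}

/-- The space `𝔻(S)`. -/
def DglobT (S : Type*) [TopologicalSpace S] : Type _ := {x : Path S // IsDglob x}

/-- The space `𝔻(S^Δ)`. -/
def DDeltaT (S : Type*) [TopologicalSpace S] : Type _ := {x : Path S // IsCadlagDelta x}

/-! ### Time changes `Λ̃` and `Λ` -/

/-- `l` is an increasing bijection of `ℝ₊` (extended by the identity on negative reals):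
the class `Λ̃`. -/
def IsTimeBij (l : ℝ → ℝ) : Prop :=
  StrictMono l ∧ Function.Surjective l ∧ ∀ t ≤ (0:ℝ), l t = t

/-- `‖log λ̇‖_t ≤ ε`, expressed through slopes. -/
def LogSlopeLe (l : ℝ → ℝ) (t ε : ℝ) : Prop :=
  ∀ s₁ s₂ : ℝ, 0 ≤ s₁ → s₁ < s₂ → s₂ ≤ t → |Real.log ((l s₂ - l s₁) / (s₂ - s₁))| ≤ ε

/-- `‖λ - id‖_t ≤ ε`. -/
def IdDistLe (l : ℝ → ℝ) (t ε : ℝ) : Prop := ∀ s : ℝ, 0 ≤ s → s ≤ t → |l s - s| ≤ ε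

/-- `l` belongs to the class `Λ` of increasing bijections of `ℝ₊` which are locally
Lipschitz together with their inverses (equivalently, `‖log λ̇‖_t < ∞` for all `t`). -/
def IsLipTimeBij (l : ℝ → ℝ) : Prop :=
  IsTimeBij l ∧ ∀ t : ℝ, 0 < t → ∃ C : ℝ, LogSlopeLe l t C

/-- `ξ(x) < ∞` together with the relative compactness in `S` of `{x_s, s < ξ(x)}`. -/
def Case1 (x : Path S) : Prop := explodes x ∧ IsCompact (closure (pathRange x))

/-- Convergence criterion of Theorem 2.6, parametrized by the class of time changes and
by the norm used on them. -/
def ConvGen (ρ : S → S → ℝ) (Lam : (ℝ → ℝ) → Prop) (Nrm : (ℝ → ℝ) → ℝ → ℝ → Prop)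
    (xk : ℕ → Path S) (x : Path S) : Prop :=
  ∃ l : ℕ → ℝ → ℝ, (∀ k, Lam (l k)) ∧
    (Case1 x →
      ((∀ᶠ k in atTop, ∀ s : ℝ, 0 ≤ s → s < l k (xiR x) → xk k s ≠ OnePoint.infty) ∧
      (∀ ε > (0:ℝ), ∀ᶠ k in atTop, ∀ s : ℝ, 0 ≤ s → s < xiR x →
        dd ρ (x s) (xk k (l k s)) ≤ ε) ∧
      Tendsto (fun k => xk k (l k (xiR x))) atTop (𝓝 (OnePoint.infty : OnePoint S)) ∧
      (∀ ε > (0:ℝ), ∀ᶠ k in atTop, Nrm (l k) (xiR x) ε))) ∧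
    (¬ Case1 x →
      ∀ t : ℝ, 0 ≤ t → x t ≠ OnePoint.infty →
        ((∀ᶠ k in atTop, xk k (l k t) ≠ OnePoint.infty) ∧
        (∀ ε > (0:ℝ), ∀ᶠ k in atTop, ∀ s : ℝ, 0 ≤ s → s ≤ t →
          dd ρ (x s) (xk k (l k s)) ≤ ε) ∧
        (∀ ε > (0:ℝ), ∀ᶠ k in atTop, Nrm (l k) t ε)))

/-- Convergence criterion of Theorem 2.6 (with `Λ` and `‖log λ̇‖`). -/
def ConvLoc (ρ : S → S → ℝ) (xk : ℕ → Path S) (x : Path S) : Prop :=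
  ConvGen ρ IsLipTimeBij LogSlopeLe xk x

/-- Convergence criterion of Theorem 2.7 (with `Λ̃` and `‖λ - id‖`). -/
def ConvLocTilde (ρ : S → S → ℝ) (xk : ℕ → Path S) (x : Path S) : Prop :=
  ConvGen ρ IsTimeBij IdDistLe xk x

/-! ### σ-algebras -/

/-- The Borel σ-algebra of `S^Δ`. -/
def msOP (S : Type*) [TopologicalSpace S] : MeasurableSpace (OnePoint S) := borel _

/-- The σ-algebra `𝓕_t = σ(X_s, 0 ≤ s ≤ t)`. -/
def filt {α : Type*} (ev : α → Path S) (t : ℝ) : MeasurableSpace α :=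
  ⨆ s ∈ Icc (0:ℝ) t, MeasurableSpace.comap (fun x => ev x s) (msOP S)

/-- The σ-algebra `𝓕_{t-} = σ(X_s, 0 ≤ s < t)`. -/
def filtLt {α : Type*} (ev : α → Path S) (t : ℝ) : MeasurableSpace α :=
  ⨆ s ∈ Ico (0:ℝ) t, MeasurableSpace.comap (fun x => ev x s) (msOP S)

/-- The σ-algebra `𝓕 = σ(X_s, 0 ≤ s < ∞)`. -/
def filtAll {α : Type*} (ev : α → Path S) : MeasurableSpace α :=
  ⨆ s ∈ Ici (0:ℝ), MeasurableSpace.comap (fun x => ev x s) (msOP S)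

/-- The σ-algebra `𝓕_{t+} = ⋂_{s>t} 𝓕_s`. -/
def filtPlus {α : Type*} (ev : α → Path S) (t : ℝ) : MeasurableSpace α :=
  ⨅ s ∈ Ioi t, filt ev s

/-- `τ` is an `(𝓕_t)`-stopping time. -/
def IsStopping {α : Type*} (ev : α → Path S) (τ : α → ℝ≥0∞) : Prop :=
  ∀ t : ℝ, 0 ≤ t → MeasurableSet[filt ev t] {x | τ x ≤ ENNReal.ofReal t}

open Classical in
/-- Evaluation of a path at a `[0,∞]`-valued time (`Δ` at time `∞`). -/
def evalE (x : Path S) (t : ℝ≥0∞) : OnePoint S :=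
  if t = ⊤ then OnePoint.infty else x t.toReal

open Classical in
/-- The left limit `x_{t-}`, junk value `Δ` if it does not exist. -/
def leftLimVal (x : Path S) (t : ℝ) : OnePoint S :=
  if h : ∃ a : OnePoint S, Tendsto x (𝓝[<] t) (𝓝 a) then h.choose else OnePoint.infty

/-- The exit time `τ^U = inf {t ≥ 0 | X_{t-} ∉ U or X_t ∉ U}`. -/
def tauU (U : Set S) (x : Path S) : ℝ≥0∞ :=
  ⨅ t ∈ {t : ℝ | 0 ≤ t ∧
      ((0 < t ∧ ¬ ∃ a ∈ U, Tendsto x (𝓝[<] t) (𝓝 (a : OnePoint S))) ∨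
        ¬ ∃ a ∈ U, x t = (a : OnePoint S))},
    ENNReal.ofReal t

/-! ### The modulus `ω'` -/

/-- The modulus of continuity `ω'_{t,K,x}(δ)` of (2.5), with values in `[0,∞]`. -/
def omegaMod (ρ : S → S → ℝ) (t : ℝ) (K : Set S) (x : Path S) (δ : ℝ) : ℝ≥0∞ :=
  ⨅ (p : ℕ × (ℕ → ℝ)) (_ : p.2 0 = 0 ∧ (∀ i < p.1, p.2 i + δ < p.2 (i + 1)) ∧
      (∀ s : ℝ, 0 ≤ s → s < p.2 p.1 → x s ≠ OnePoint.infty) ∧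
      ¬ (p.2 p.1 ≤ t ∧ ∃ a ∈ K, x (p.2 p.1) = (a : OnePoint S))),
    ⨆ (i : ℕ) (_ : i < p.1) (s₁ : ℝ) (_ : p.2 i ≤ s₁ ∧ s₁ < p.2 (i + 1))
      (s₂ : ℝ) (_ : p.2 i ≤ s₂ ∧ s₂ < p.2 (i + 1)),
      ENNReal.ofReal (dd ρ (x s₁) (x s₂))

/-! ### Skorokhod pseudo-metrics -/

open Classical in
/-- The penalty term `d(x_{t₁}, K^c) ∧ (t - t₁)_+ 𝟙_{t₁ < ξ(x)}` appearing in the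
definition of the pseudo-metrics (with the convention `d(a, ∅) = +∞`). -/
noncomputable def pen (ρ : S → S → ℝ) (t : ℝ) (K : Set S) (x : Path S) (t₁ : ℝ) : ℝ :=
  Option.elim (show Option S from x t₁) 0 (fun a =>
    if (Kᶜ : Set S).Nonempty then min (sInf ((fun b => ρ a b) '' (Kᶜ : Set S))) (max (t - t₁) 0)
    else max (t - t₁) 0)

open Classical in
/-- The set of admissible bounds in the definition of `ρ̃_{t,K}` (`useLip = false`) and of
`ρ_{t,K}` (`useLip = true`). -/
def rhoSet (useLip : Bool) (ρ : S → S → ℝ) (t : ℝ) (K : Set S) (x y : Path S) : Set ℝ :=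
  {r : ℝ | 0 ≤ r ∧ ∃ t₁ t₂ : ℝ, ∃ l : ℝ → ℝ, 0 ≤ t₁ ∧ 0 ≤ t₂ ∧ l t₁ = t₂ ∧
    (if useLip then IsLipTimeBij l else IsTimeBij l) ∧
    (∀ s : ℝ, 0 ≤ s → s < t₁ → x s ≠ OnePoint.infty) ∧
    (∀ s : ℝ, 0 ≤ s → s < t₂ → y s ≠ OnePoint.infty) ∧
    (∀ s : ℝ, 0 ≤ s → s < t₁ → dd ρ (x s) (y (l s)) ≤ r) ∧
    IdDistLe l t₁ r ∧
    (useLip = true → LogSlopeLe l t₁ r) ∧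
    pen ρ t K x t₁ ≤ r ∧ pen ρ t K y t₂ ≤ r}

/-- The pseudo-metric `ρ̃_{t,K}`. -/
noncomputable def rhoTilde (ρ : S → S → ℝ) (t : ℝ) (K : Set S) (x y : Path S) : ℝ :=
  sInf (rhoSet false ρ t K x y)

/-- The pseudo-metric `ρ_{t,K}`. -/
noncomputable def rhoMet (ρ : S → S → ℝ) (t : ℝ) (K : Set S) (x y : Path S) : ℝ :=
  sInf (rhoSet true ρ t K x y)

/-! ### Time change -/

/-- `g ∈ C^{≠0}(S, ℝ₊)`: `{g = 0}` is closed and `g` is continuous on `{g ≠ 0}`. -/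
def Czero (g : S → ℝ) : Prop :=
  (∀ a : S, 0 ≤ g a) ∧ IsClosed {a : S | g a = 0} ∧ ContinuousOn g {a : S | g a ≠ 0}

/-- `g ∈ C̃^{≠0}(S, ℝ₊)`: moreover `g` is bounded on every compact subset of `S`. -/
def CzeroLocBdd (g : S → ℝ) : Prop :=
  Czero g ∧ ∀ K : Set S, IsCompact K → ∃ C : ℝ, ∀ a ∈ K, g a ≤ C

/-- `g` extended to `S^Δ` by the junk value `0` at `Δ`. -/
def gOP (g : S → ℝ) : OnePoint S → ℝ := fun a => Option.elim (show Option S from a) 0 g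

open Classical in
/-- The additive functional `A^g_t(x) = ∫_0^t du / g(x_u)` for `t ∈ [0, τ^{{g≠0}}(x)]`,
and `+∞` otherwise. -/
noncomputable def Ag (g : S → ℝ) (x : Path S) (t : ℝ) : ℝ≥0∞ :=
  if 0 ≤ t ∧ ENNReal.ofReal t ≤ tauU {a : S | g a ≠ 0} x then
    ∫⁻ u in Ioo (0:ℝ) t, (ENNReal.ofReal (gOP g (x u)))⁻¹
  else ⊤

/-- The time change `τ^g_t(x) = inf {s ≥ 0 | A^g_s(x) ≥ t}`, for `t ∈ [0,∞]`. -/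
noncomputable def taug (g : S → ℝ) (x : Path S) (t : ℝ≥0∞) : ℝ≥0∞ :=
  ⨅ s ∈ {s : ℝ | 0 ≤ s ∧ t ≤ Ag g x s}, ENNReal.ofReal s

/-- The total mass `A^g_{τ^g_∞(x)}(x) = ∫_0^{τ^{{g≠0}}(x)} du / g(x_u)`. -/
noncomputable def Atotal (g : S → ℝ) (x : Path S) : ℝ≥0∞ :=
  ∫⁻ u in {u : ℝ | 0 < u ∧ ENNReal.ofReal u ≤ tauU {a : S | g a ≠ 0} x},
    (ENNReal.ofReal (gOP g (x u)))⁻¹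

/-- The filter of times converging to `t ∈ [0,∞]` from the left. -/
noncomputable def leftFilter (t : ℝ≥0∞) : Filter ℝ := if t = ⊤ then atTop else 𝓝[<] t.toReal

open Classical in
/-- The left limit `x_{t-}` at a `[0,∞]`-valued time, junk value `Δ` if it does not exist. -/
noncomputable def leftLimValE (x : Path S) (t : ℝ≥0∞) : OnePoint S :=
  if h : ∃ a : OnePoint S, Tendsto x (leftFilter t) (𝓝 a) then h.choose else OnePoint.infty

open Classical in
/-- The time-changed path `g·x` of Definition 3.1.  -/
noncomputable def timeChange (g : S → ℝ) (x : Path S) : Path S := fun t =>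
  if 0 ≤ t ∧ Atotal g x ≤ ENNReal.ofReal t ∧
      ∃ a : S, g a = 0 ∧ Tendsto x (leftFilter (tauU {b : S | g b ≠ 0} x)) (𝓝 (a : OnePoint S))
  then leftLimValE x (tauU {b : S | g b ≠ 0} x)
  else evalE x (taug g x (ENNReal.ofReal t))

/-- The constant path equal to `Δ`. -/
def deadPath (S : Type*) [TopologicalSpace S] : Path S := fun _ => OnePoint.infty

lemma isDexp_deadPath : IsDexp (deadPath S) := by
  refine ⟨fun _ _ => rfl, fun _ _ _ _ => rfl, ?_, ?_, ?_⟩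
  · have : xiSet (deadPath S) = univ := by ext t; simp [xiSet, deadPath]
    rw [this]; exact isClosed_univ
  · intro t _ h; exact absurd rfl h
  · intro t _ h; exact absurd rfl h

lemma isDloc_deadPath : IsDloc (deadPath S) := by
  refine ⟨isDexp_deadPath, ?_⟩
  rintro ⟨-, hxi, -⟩
  exfalso
  have huniv : xiSet (deadPath S) = univ := by ext t; simp [xiSet, deadPath]
  have : xiR (deadPath S) = 0 := by
    rw [xiR, huniv]
    exact Real.sInf_of_not_bddBelow (by simp [not_bddBelow_univ (α := ℝ)])
  rw [this] at hxi; exact lt_irrefl 0 hxi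

lemma isCadlagDelta_deadPath : IsCadlagDelta (deadPath S) :=
  ⟨fun _ _ => rfl, fun _ _ => tendsto_const_nhds, fun _ _ => ⟨OnePoint.infty, tendsto_const_nhds⟩⟩

open Classical in
/-- Packaging of a raw path as an element of `𝔻_loc(S)` (junk value if it is not one). -/
noncomputable def toDloc (y : Path S) : DlocT S :=
  if h : IsDloc y then ⟨y, h⟩ else ⟨deadPath S, isDloc_deadPath⟩

open Classical in
/-- Packaging of a raw path as an element of `𝔻(S^Δ)` (junk value if it is not one). -/
noncomputable def toDDelta (y : Path S) : DDeltaT S :=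
  if h : IsCadlagDelta y then ⟨y, h⟩ else ⟨deadPath S, isCadlagDelta_deadPath⟩

/-- Condition defining the continuity set `B` of Theorem 3.3, for a pair `(g, x)`. -/
def BCond (g : S → ℝ) (x : Path S) : Prop :=
  (tauU {a : S | g a ≠ 0} x < xiE x →
    ∀ t : ℝ, tauU {a : S | g a ≠ 0} x < ENNReal.ofReal t →
      ∫⁻ u in Ioo (0:ℝ) t, (ENNReal.ofReal (gOP g (x u)))⁻¹ = ⊤) ∧
  (Atotal g x < ⊤ →
    ∀ a : S, tauU {a : S | g a ≠ 0} x ≠ ⊤ →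
      Tendsto x (𝓝[<] (tauU {a : S | g a ≠ 0} x).toReal) (𝓝 (a : OnePoint S)) →
      g a = 0 → x ((tauU {a : S | g a ≠ 0} x).toReal) = (a : OnePoint S))

/-- `x_{ξ(x)-}` exists in `U` whenever `0 < ξ(x) < ∞`. -/
def limExistsIn (U : Set S) (y : Path S) : Prop :=
  (explodes y ∧ 0 < xiR y) → ∃ a ∈ U, Tendsto y (𝓝[<] xiR y) (𝓝 (a : OnePoint S))

/-! ### Global Skorokhod convergence -/

/-- Convergence in the global Skorokhod topology of `𝔻(S)` (Corollary 2.7). -/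
def ConvGlob (ρ : S → S → ℝ) (xk : ℕ → Path S) (x : Path S) : Prop :=
  ∃ l : ℕ → ℝ → ℝ, (∀ k, IsLipTimeBij (l k)) ∧ ∀ t : ℝ, 0 ≤ t →
    (∀ ε > (0:ℝ), ∀ᶠ k in atTop, ∀ s : ℝ, 0 ≤ s → s ≤ t → dd ρ (x s) (xk k (l k s)) ≤ ε) ∧
    (∀ ε > (0:ℝ), ∀ᶠ k in atTop, LogSlopeLe (l k) t ε)

/-- Convergence in the global Skorokhod topology of `𝔻(S^Δ)`, written with entourages of the
(unique) uniformity of the compact space `S^Δ` (equivalently, with any compatible metric). -/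
def ConvGlobDelta (xk : ℕ → Path S) (x : Path S) : Prop :=
  ∃ l : ℕ → ℝ → ℝ, (∀ k, IsTimeBij (l k)) ∧ ∀ t : ℝ, 0 ≤ t →
    (∀ V ∈ 𝓝ˢ (Set.diagonal (OnePoint S)), ∀ᶠ k in atTop,
      ∀ s : ℝ, 0 ≤ s → s ≤ t → ((x s, xk k (l k s)) : OnePoint S × OnePoint S) ∈ V) ∧
    (∀ ε > (0:ℝ), ∀ᶠ k in atTop, IdDistLe (l k) t ε)

/-! ### Markov families -/

/-- The shifted path `(X_{t₀+t})_{t≥0}`, at a `[0,∞]`-valued time `t₀`. -/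
noncomputable def shiftE (x : Path S) (t₀ : ℝ≥0∞) : Path S := fun t =>
  if t₀ = ⊤ then OnePoint.infty else x (t₀.toReal + max t 0)

/-- Conditions a), b) in the definition of a Markov family (together with the
normalisation `P_Δ(ξ = 0) = 1`). -/
def MarkovBase {α : Type*} (ev : α → Path S)
    (P : OnePoint S → @Measure α (filtAll ev)) : Prop :=
  (∀ a : OnePoint S, @IsProbabilityMeasure α (filtAll ev) (P a)) ∧
  (∀ B : Set α, MeasurableSet[filtAll ev] B →
    @Measurable S ℝ≥0∞ (borel S) inferInstance (fun a : S => P (a : OnePoint S) B)) ∧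
  (∀ a : S, P (a : OnePoint S) {x | ev x 0 = (a : OnePoint S)} = 1) ∧
  (P OnePoint.infty {x | ev x 0 = OnePoint.infty} = 1)

/-- Condition c) in the definition of a `(𝓖_t)`-Markov family. -/
def MarkovProp {α : Type*} (ev : α → Path S) (G : ℝ → MeasurableSpace α)
    (P : OnePoint S → @Measure α (filtAll ev)) : Prop :=
  ∀ (a : OnePoint S) (t₀ : ℝ), 0 ≤ t₀ →
    ∀ B : Set (Path S), MeasurableSet[filtAll (id : Path S → Path S)] B →
      ∀ A : Set α, MeasurableSet[G t₀] A →
        P a (A ∩ {x | (fun t => ev x (t₀ + max t 0)) ∈ B}) =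
          ∫⁻ x in A, P (ev x t₀) {y | ev y ∈ B} ∂(P a)

/-- Condition c) for a `(𝓖_t)`-strong Markov family: the Markov property at every
`(𝓖_t)`-stopping time. -/
def StrongMarkovProp {α : Type*} (ev : α → Path S) (G : ℝ → MeasurableSpace α)
    (P : OnePoint S → @Measure α (filtAll ev)) : Prop :=
  ∀ (a : OnePoint S) (τ : α → ℝ≥0∞),
    (∀ t : ℝ, 0 ≤ t → MeasurableSet[G t] {x | τ x ≤ ENNReal.ofReal t}) →
    ∀ B : Set (Path S), MeasurableSet[filtAll (id : Path S → Path S)] B →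
      ∀ A : Set α, MeasurableSet[filtAll ev] A →
        (∀ t : ℝ, 0 ≤ t → MeasurableSet[G t] (A ∩ {x | τ x ≤ ENNReal.ofReal t})) →
        P a (A ∩ {x | shiftE (ev x) (τ x) ∈ B}) =
          ∫⁻ x in A, P (evalE (ev x) (τ x)) {y | ev y ∈ B} ∂(P a)

/-! Nonnegativity is built into `rhoSet`. The value `0` on the diagonal is attained by the identity
time change, cut at the first explosion time or at time `t`, whichever comes first: there the
penalty vanishes. Symmetry comes from inverting the time change. For the triangle inequality the
two time changes are composed and cut where the first of the two matchings ends; the penalty at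
that cut is controlled through the middle path, since it is `1`-Lipschitz in the point and in
the time. -/

open scoped Pointwise

lemma csInf_le_csInf_add_csInf {M : Type*} [ConditionallyCompleteLattice M] [AddGroup M]
    [AddLeftMono M] [AddRightMono M] {A B C : Set M} (hA : A.Nonempty) (hA' : BddBelow A)
    (hB : B.Nonempty) (hB' : BddBelow B) (hC : BddBelow C) (h : A + B ⊆ C) :
    sInf C ≤ sInf A + sInf B :=
  csInf_add hA hA' hB hB' ▸ csInf_le_csInf hC (hA.add hB) h

section TimeChange

variable {l m : ℝ → ℝ} {T C C₁ C₂ : ℝ}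

lemma IsTimeBij.map_zero (hl : IsTimeBij l) : l 0 = 0 := hl.2.2 0 le_rfl

lemma IsTimeBij.nonneg (hl : IsTimeBij l) {s : ℝ} (hs : 0 ≤ s) : 0 ≤ l s :=
  hl.map_zero ▸ hl.1.monotone hs

lemma isTimeBij_id : IsTimeBij id := ⟨strictMono_id, Function.surjective_id, fun _ _ => rfl⟩

lemma IsTimeBij.comp (hl : IsTimeBij l) (hm : IsTimeBij m) : IsTimeBij (m ∘ l) :=
  ⟨hm.1.comp hl.1, hm.2.1.comp hl.2.1, fun s hs => by simp [hl.2.2 s hs, hm.2.2 s hs]⟩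

noncomputable def IsTimeBij.toOrderIso (hl : IsTimeBij l) : ℝ ≃o ℝ :=
  StrictMono.orderIsoOfSurjective l hl.1 hl.2.1

lemma IsTimeBij.symm (hl : IsTimeBij l) : IsTimeBij hl.toOrderIso.symm :=
  ⟨hl.toOrderIso.symm.strictMono, hl.toOrderIso.symm.surjective,
    fun s hs => hl.toOrderIso.symm_apply_eq.2 (hl.2.2 s hs).symm⟩

lemma logSlopeLe_id (hC : 0 ≤ C) : LogSlopeLe id T C := by
  intro s₁ s₂ _ h₁₂ _
  simpa [div_self (sub_ne_zero.2 h₁₂.ne')] using hC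

lemma LogSlopeLe.mono (h : LogSlopeLe l T C) {T' : ℝ} (hT : T' ≤ T) : LogSlopeLe l T' C :=
  fun s₁ s₂ h₁ h₁₂ h₂ => h s₁ s₂ h₁ h₁₂ (h₂.trans hT)

/-- Slopes of a composite multiply, so their logarithms add. -/
lemma LogSlopeLe.comp (hl : StrictMono l) (hl0 : l 0 = 0) (hm : StrictMono m)
    (h₁ : LogSlopeLe l T C₁) (h₂ : LogSlopeLe m (l T) C₂) : LogSlopeLe (m ∘ l) T (C₁ + C₂) := by
  intro s₁ s₂ hs₁ h₁₂ hs₂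
  have hd : 0 < s₂ - s₁ := sub_pos.2 h₁₂
  have hld : 0 < l s₂ - l s₁ := sub_pos.2 (hl h₁₂)
  have hmd : 0 < m (l s₂) - m (l s₁) := sub_pos.2 (hm (hl h₁₂))
  have hslope : (m (l s₂) - m (l s₁)) / (s₂ - s₁) =
      (m (l s₂) - m (l s₁)) / (l s₂ - l s₁) * ((l s₂ - l s₁) / (s₂ - s₁)) := by
    field_simp
  rw [Function.comp_apply, Function.comp_apply, hslope,
    Real.log_mul (div_pos hmd hld).ne' (div_pos hld hd).ne', add_comm C₁]
  exact (abs_add_le _ _).trans (add_le_add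
    (h₂ _ _ (hl0 ▸ hl.monotone hs₁) (hl h₁₂) (hl.monotone hs₂)) (h₁ _ _ hs₁ h₁₂ hs₂))

lemma LogSlopeLe.symm {e : ℝ ≃o ℝ} (he : e 0 = 0) (h : LogSlopeLe e (e.symm T) C) :
    LogSlopeLe e.symm T C := by
  intro s₁ s₂ hs₁ h₁₂ hs₂
  have hw₁ : 0 ≤ e.symm s₁ := e.le_symm_apply.2 (he.symm ▸ hs₁)
  have := h _ _ hw₁ (e.symm.strictMono h₁₂) (e.symm.monotone hs₂)
  rwa [e.apply_symm_apply, e.apply_symm_apply, ← inv_div, Real.log_inv, abs_neg] at this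

lemma isLipTimeBij_id : IsLipTimeBij id := ⟨isTimeBij_id, fun _ _ => ⟨0, logSlopeLe_id le_rfl⟩⟩

lemma IsLipTimeBij.comp (hl : IsLipTimeBij l) (hm : IsLipTimeBij m) : IsLipTimeBij (m ∘ l) := by
  refine ⟨hl.1.comp hm.1, fun T hT => ?_⟩
  obtain ⟨C₁, h₁⟩ := hl.2 T hT
  obtain ⟨C₂, h₂⟩ := hm.2 (l T) (hl.1.map_zero ▸ hl.1.1 hT)
  exact ⟨C₁ + C₂, h₁.comp hl.1.1 hl.1.map_zero hm.1.1 h₂⟩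

lemma IsLipTimeBij.symm (hl : IsLipTimeBij l) : IsLipTimeBij hl.1.toOrderIso.symm := by
  refine ⟨hl.1.symm, fun T hT => ?_⟩
  obtain ⟨C, h⟩ := hl.2 _ (hl.1.symm.map_zero ▸ hl.1.symm.1 hT)
  exact ⟨C, LogSlopeLe.symm hl.1.map_zero h⟩

def IsAdmissible (useLip : Bool) (l : ℝ → ℝ) : Prop :=
  if useLip then IsLipTimeBij l else IsTimeBij l

variable {u : Bool}

lemma IsAdmissible.isTimeBij (h : IsAdmissible u l) : IsTimeBij l := by
  cases u
  exacts [h, h.1]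

lemma isAdmissible_id (u : Bool) : IsAdmissible u id := by
  cases u
  exacts [isTimeBij_id, isLipTimeBij_id]

lemma IsAdmissible.comp (hl : IsAdmissible u l) (hm : IsAdmissible u m) :
    IsAdmissible u (m ∘ l) := by
  cases u
  exacts [IsTimeBij.comp hl hm, IsLipTimeBij.comp hl hm]

lemma IsAdmissible.symm (h : IsAdmissible u l) : IsAdmissible u h.isTimeBij.toOrderIso.symm := by
  cases u
  exacts [IsTimeBij.symm h, IsLipTimeBij.symm h]

end TimeChange

section Penalty

variable {X : Type*} {ρ : X → X → ℝ} {t s : ℝ} {K : Set X} {x : Path X}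

lemma pen_of_eq_infty (hx : x s = OnePoint.infty) : pen ρ t K x s = 0 := by
  simp only [pen, hx]
  rfl

lemma pen_le_max : pen ρ t K x s ≤ max (t - s) 0 := by
  rcases hx : x s with _ | a
  · exact (pen_of_eq_infty hx).trans_le (le_max_right _ _)
  · simp only [pen, hx]
    split_ifs
    exacts [min_le_right _ _, le_rfl]

lemma exists_alive_before_pen_nonpos (hx : IsClosed (xiSet x)) :
    ∃ t₁, 0 ≤ t₁ ∧ (∀ s, 0 ≤ s → s < t₁ → x s ≠ OnePoint.infty) ∧ pen ρ t K x t₁ ≤ 0 := by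
  set F := xiSet x ∩ Icc 0 (max t 0)
  have hFbdd : BddBelow F := ⟨0, fun s hs => hs.2.1⟩
  by_cases hF : F.Nonempty
  · have hmem : sInf F ∈ F := (hx.inter isClosed_Icc).csInf_mem hF hFbdd
    refine ⟨sInf F, hmem.2.1, fun s hs hsF hxs => ?_, (pen_of_eq_infty hmem.1).le⟩
    exact hsF.not_ge (csInf_le hFbdd ⟨hxs, hs, hsF.le.trans hmem.2.2⟩)
  · refine ⟨max t 0, le_max_right t 0, fun s hs hst hxs => hF ⟨s, hxs, hs, hst.le⟩, ?_⟩
    exact pen_le_max.trans (max_eq_right (sub_nonpos.2 (le_max_left t 0))).le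

end Penalty

section Metric

variable {X : Type*} [PseudoMetricSpace X]

lemma dd_coe (a b : X) : dd dist (a : OnePoint X) (b : OnePoint X) = dist a b := rfl

lemma dd_comm (a b : OnePoint X) : dd dist a b = dd dist b a := by
  rcases a with _ | a <;> rcases b with _ | b <;> simp [dd, dist_comm]

lemma dd_self (a : OnePoint X) : dd dist a a = 0 := by
  rcases a with _ | a <;> simp [dd]

lemma dd_triangle {a b c : OnePoint X} (hb : b ≠ OnePoint.infty) :
    dd dist a c ≤ dd dist a b + dd dist b c := by
  rcases b with _ | b
  · exact absurd rfl hb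
  rcases a with _ | a <;> rcases c with _ | c <;>
    simp [dd, dist_nonneg, dist_triangle]

open Classical in
lemma pen_of_eq_coe {t s : ℝ} {K : Set X} {x : Path X} {a : X} (hx : x s = a) :
    pen dist t K x s =
      if Kᶜ.Nonempty then min (Metric.infDist a Kᶜ) (max (t - s) 0) else max (t - s) 0 := by
  simp only [pen, hx, sInf_image', ← Metric.infDist_eq_iInf]
  rfl

/-- Both terms of the penalty, `d(x_s, Kᶜ)` and `(t - s)₊`, are `1`-Lipschitz. -/
lemma pen_le_pen_add {t r s₁ s₂ : ℝ} {K : Set X} {x y : Path X}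
    (hx : x s₁ ≠ OnePoint.infty) (hy : y s₂ ≠ OnePoint.infty)
    (hd : dd dist (x s₁) (y s₂) ≤ r) (hs : |s₂ - s₁| ≤ r) :
    pen dist t K x s₁ ≤ pen dist t K y s₂ + r := by
  obtain ⟨a, ha⟩ := OnePoint.ne_infty_iff_exists.1 hx
  obtain ⟨b, hb⟩ := OnePoint.ne_infty_iff_exists.1 hy
  rw [← ha, ← hb, dd_coe] at hd
  have htime : max (t - s₁) 0 ≤ max (t - s₂) 0 + r :=
    max_le (by linarith [le_max_left (t - s₂) 0, le_abs_self (s₂ - s₁)])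
      (by linarith [le_max_right (t - s₂) 0, abs_nonneg (s₂ - s₁)])
  rw [pen_of_eq_coe ha.symm, pen_of_eq_coe hb.symm]
  split_ifs
  · rw [← min_add_add_right]
    exact min_le_min ((Metric.infDist_le_infDist_add_dist).trans (by linarith)) htime
  · exact htime

end Metric

section RhoSet

variable {X : Type*} {t : ℝ} {K : Set X} {u : Bool} {x y z : Path X}

lemma idDistLe_id {T C : ℝ} (hC : 0 ≤ C) : IdDistLe id T C := fun s _ _ => by simpa using hC

lemma max_mem_rhoSet (ρ : X → X → ℝ) : max t 0 ∈ rhoSet u ρ t K x y := by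
  have hpen : ∀ v : Path X, pen ρ t K v 0 ≤ max t 0 := fun v => by
    simpa using (pen_le_max (ρ := ρ) (K := K) (x := v) (t := t) (s := 0))
  refine ⟨le_max_right t 0, 0, 0, id, le_rfl, le_rfl, rfl, isAdmissible_id u,
    fun s hs hs0 => absurd hs hs0.not_ge, fun s hs hs0 => absurd hs hs0.not_ge,
    fun s hs hs0 => absurd hs hs0.not_ge, idDistLe_id (le_max_right t 0),
    fun _ => logSlopeLe_id (le_max_right t 0), hpen x, hpen y⟩

lemma rhoSet_nonempty (ρ : X → X → ℝ) : (rhoSet u ρ t K x y).Nonempty :=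
  ⟨max t 0, max_mem_rhoSet ρ⟩

lemma rhoSet_bddBelow (ρ : X → X → ℝ) : BddBelow (rhoSet u ρ t K x y) := ⟨0, fun _ hr => hr.1⟩

lemma sInf_rhoSet_nonneg {ρ : X → X → ℝ} : 0 ≤ sInf (rhoSet u ρ t K x y) :=
  Real.sInf_nonneg fun _ hr => hr.1

variable [PseudoMetricSpace X]

lemma zero_mem_rhoSet_self (hx : IsClosed (xiSet x)) : 0 ∈ rhoSet u dist t K x x := by
  obtain ⟨t₁, ht₁, halive, hpen⟩ := exists_alive_before_pen_nonpos (ρ := dist) (t := t) (K := K) hx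
  exact ⟨le_rfl, t₁, t₁, id, ht₁, ht₁, rfl, isAdmissible_id u, halive, halive,
    fun s _ _ => (dd_self (x s)).le, idDistLe_id le_rfl, fun _ => logSlopeLe_id le_rfl,
    hpen, hpen⟩

lemma rhoSet_comm_subset : rhoSet u dist t K x y ⊆ rhoSet u dist t K y x := by
  rintro r ⟨hr, t₁, t₂, l, ht₁, ht₂, hlt₁, (hl : IsAdmissible u l), hx, hy, hd, hid, hlog, hpx, hpy⟩
  set e := hl.isTimeBij.toOrderIso
  have he0 : e 0 = 0 := hl.isTimeBij.map_zero
  have het₂ : e.symm t₂ = t₁ := e.symm_apply_eq.2 hlt₁.symm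
  have hmaps : ∀ s, 0 ≤ s → 0 ≤ e.symm s := fun s hs => hl.isTimeBij.symm.nonneg hs
  refine ⟨hr, t₂, t₁, e.symm, ht₂, ht₁, het₂, hl.symm, hy, hx, fun s hs hst => ?_,
    fun s hs hst => ?_, fun hu => LogSlopeLe.symm he0 (het₂ ▸ hlog hu), hpy, hpx⟩
  · have := hd (e.symm s) (hmaps s hs) (het₂ ▸ e.symm.strictMono hst)
    rwa [show l (e.symm s) = s from e.apply_symm_apply s, dd_comm] at this
  · have := hid (e.symm s) (hmaps s hs) (het₂ ▸ e.symm.monotone hst)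
    rwa [show l (e.symm s) = s from e.apply_symm_apply s, abs_sub_comm] at this

lemma rhoSet_comm : rhoSet u dist t K x y = rhoSet u dist t K y x :=
  rhoSet_comm_subset.antisymm rhoSet_comm_subset

/-- The composite time change `m ∘ l` is cut at the `y`-time `min t₂ u₂`. -/
lemma add_mem_rhoSet {r₁ r₂ : ℝ} (h₁ : r₁ ∈ rhoSet u dist t K x y)
    (h₂ : r₂ ∈ rhoSet u dist t K y z) : r₁ + r₂ ∈ rhoSet u dist t K x z := by
  obtain ⟨hr₁, t₁, t₂, l, -, ht₂, hlt₁, (hl : IsAdmissible u l), hx, hy₁, hd₁, hid₁, hlog₁,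
    hpx, hpy₁⟩ := h₁
  obtain ⟨hr₂, u₂, u₃, m, hu₂, -, hmu₂, (hm : IsAdmissible u m), hy₂, hz, hd₂, hid₂, hlog₂,
    hpy₂, hpz⟩ := h₂
  have hlb := hl.isTimeBij
  have hmb := hm.isTimeBij
  set e := hlb.toOrderIso
  have het₁ : e t₁ = t₂ := hlt₁
  set M := min t₂ u₂
  have hM : 0 ≤ M := le_min ht₂ hu₂
  have hT : 0 ≤ e.symm M := hlb.symm.nonneg hM
  have heM : l (e.symm M) = M := e.apply_symm_apply M
  have hT₁ : e.symm M ≤ t₁ := e.symm_apply_le.2 (het₁ ▸ min_le_left _ _)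
  have hT₃ : m M ≤ u₃ := hmu₂ ▸ hmb.1.monotone (min_le_right _ _)
  have hlt : ∀ s, s < e.symm M → l s < t₂ ∧ l s < u₂ := fun s hs =>
    lt_min_iff.1 (e.lt_symm_apply.1 hs)
  refine ⟨add_nonneg hr₁ hr₂, e.symm M, m M, m ∘ l, hT, hmb.nonneg hM,
    by rw [Function.comp_apply, heM], hl.comp hm, fun s hs hsT => hx s hs (hsT.trans_le hT₁),
    fun s hs hsT => hz s hs (hsT.trans_le hT₃), fun s hs hsT => ?_, fun s hs hsT => ?_,
    fun hu => ?_, ?_, ?_⟩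
  · have hls := hlt s hsT
    exact (dd_triangle (hy₁ _ (hlb.nonneg hs) hls.1)).trans
      (add_le_add (hd₁ s hs (hsT.trans_le hT₁)) (hd₂ _ (hlb.nonneg hs) hls.2))
  · have hls : l s ≤ u₂ := (e.le_symm_apply.1 hsT).trans (min_le_right _ _)
    calc |(m ∘ l) s - s| ≤ |m (l s) - l s| + |l s - s| := abs_sub_le _ _ _
      _ ≤ r₁ + r₂ := by linarith [hid₁ s hs (hsT.trans hT₁), hid₂ _ (hlb.nonneg hs) hls]
  · have hlogm : LogSlopeLe m (l (e.symm M)) r₂ :=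
      (hlog₂ hu).mono (by rw [heM]; exact min_le_right _ _)
    exact LogSlopeLe.comp hlb.1 hlb.map_zero hmb.1 ((hlog₁ hu).mono hT₁) hlogm
  · rcases lt_or_ge u₂ t₂ with hut | htu
    · have hMu : M = u₂ := min_eq_right hut.le
      have hTt : e.symm M < t₁ := e.symm_apply_lt.2 (by rw [het₁, hMu]; exact hut)
      have hpen := pen_le_pen_add (t := t) (K := K) (hx _ hT hTt)
        (by rw [heM, hMu]; exact hy₁ u₂ hu₂ hut) (hd₁ _ hT hTt) (hid₁ _ hT hTt.le)
      have hpy : pen dist t K y (l (e.symm M)) ≤ r₂ := by rw [heM, hMu]; exact hpy₂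
      linarith
    · rw [show e.symm M = t₁ from e.symm_apply_eq.2 (by rw [het₁]; exact min_eq_left htu)]
      linarith
  · rcases lt_or_ge t₂ u₂ with htu | hut
    · have hMt : M = t₂ := min_eq_left htu.le
      have hTu : m t₂ < u₃ := hmu₂ ▸ hmb.1 htu
      have hpen := pen_le_pen_add (t := t) (K := K) (r := r₂) (hz _ (hmb.nonneg ht₂) hTu)
        (hy₂ t₂ ht₂ htu) (by rw [dd_comm]; exact hd₂ t₂ ht₂ htu)
        (by rw [abs_sub_comm]; exact hid₂ t₂ ht₂ htu.le)
      rw [hMt]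
      linarith
    · rw [show m M = u₃ by rw [← hmu₂, show M = u₂ from min_eq_right hut]]
      linarith

lemma sInf_rhoSet_self (hx : IsClosed (xiSet x)) : sInf (rhoSet u dist t K x x) = 0 :=
  le_antisymm (csInf_le (rhoSet_bddBelow dist) (zero_mem_rhoSet_self hx))
    sInf_rhoSet_nonneg

lemma sInf_rhoSet_comm : sInf (rhoSet u dist t K x y) = sInf (rhoSet u dist t K y x) := by
  rw [rhoSet_comm]

lemma sInf_rhoSet_le_add :
    sInf (rhoSet u dist t K x z) ≤ sInf (rhoSet u dist t K x y) + sInf (rhoSet u dist t K y z) :=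
  csInf_le_csInf_add_csInf (rhoSet_nonempty dist) (rhoSet_bddBelow dist) (rhoSet_nonempty dist)
    (rhoSet_bddBelow dist) (rhoSet_bddBelow dist) (Set.add_subset_iff.2 fun _ h₁ _ h₂ =>
      add_mem_rhoSet h₁ h₂)

end RhoSet

theorem rho_pseudoMetric_general
    {S : Type*} [MetricSpace S]
    (t : ℝ) (K : Set S) :
    ((∀ x y : Path S, IsDexp x → IsDexp y → 0 ≤ rhoTilde dist t K x y) ∧
      (∀ x : Path S, IsDexp x → rhoTilde dist t K x x = 0) ∧
      (∀ x y : Path S, IsDexp x → IsDexp y →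
        rhoTilde dist t K x y = rhoTilde dist t K y x) ∧
      (∀ x y z : Path S, IsDexp x → IsDexp y → IsDexp z →
        rhoTilde dist t K x z ≤ rhoTilde dist t K x y + rhoTilde dist t K y z)) ∧
    ((∀ x y : Path S, IsDexp x → IsDexp y → 0 ≤ rhoMet dist t K x y) ∧
      (∀ x : Path S, IsDexp x → rhoMet dist t K x x = 0) ∧
      (∀ x y : Path S, IsDexp x → IsDexp y →
        rhoMet dist t K x y = rhoMet dist t K y x) ∧
      (∀ x y z : Path S, IsDexp x → IsDexp y → IsDexp z →
        rhoMet dist t K x z ≤ rhoMet dist t K x y + rhoMet dist t K y z)) := by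
  unfold rhoTilde rhoMet
  exact ⟨⟨fun _ _ _ _ => sInf_rhoSet_nonneg, fun _ hx => sInf_rhoSet_self hx.2.2.1,
      fun _ _ _ _ => sInf_rhoSet_comm, fun _ _ _ _ _ _ => sInf_rhoSet_le_add⟩,
    ⟨fun _ _ _ _ => sInf_rhoSet_nonneg, fun _ hx => sInf_rhoSet_self hx.2.2.1,
      fun _ _ _ _ => sInf_rhoSet_comm, fun _ _ _ _ _ _ => sInf_rhoSet_le_add⟩⟩

/-- Lemma 4.1. For every `0 ≤ t < ∞` and compact `K ⊆ S`, the functions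
`ρ̃_{t,K}` and `ρ_{t,K}` are pseudo-metrics on `𝔻_exp(S)`: they are nonnegative, vanish on
the diagonal, are symmetric, and satisfy the triangle inequality. -/
theorem rho_pseudoMetric
    {S : Type*} [MetricSpace S] [SecondCountableTopology S] [LocallyCompactSpace S]
    (t : ℝ) (ht : 0 ≤ t) (K : Set S) (hK : IsCompact K) :
    ((∀ x y : Path S, IsDexp x → IsDexp y → 0 ≤ rhoTilde dist t K x y) ∧
      (∀ x : Path S, IsDexp x → rhoTilde dist t K x x = 0) ∧
      (∀ x y : Path S, IsDexp x → IsDexp y →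
        rhoTilde dist t K x y = rhoTilde dist t K y x) ∧
      (∀ x y z : Path S, IsDexp x → IsDexp y → IsDexp z →
        rhoTilde dist t K x z ≤ rhoTilde dist t K x y + rhoTilde dist t K y z)) ∧
    ((∀ x y : Path S, IsDexp x → IsDexp y → 0 ≤ rhoMet dist t K x y) ∧
      (∀ x : Path S, IsDexp x → rhoMet dist t K x x = 0) ∧
      (∀ x y : Path S, IsDexp x → IsDexp y →
        rhoMet dist t K x y = rhoMet dist t K y x) ∧
      (∀ x y z : Path S, IsDexp x → IsDexp y → IsDexp z →
        rhoMet dist t K x z ≤ rhoMet dist t K x y + rhoMet dist t K y z)) :=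
  rho_pseudoMetric_general t K

end LocSkor
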